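/- arXiv:1905.01890 — 9 statements merged into one kernel-verified Lean document; each statement's English description precedes it below -/
import Mathlib

section
/- For any positive integer $b$, $\sum_{c=1}^{b} \frac{(-1)^c}{(b-c)!\,c!\,c} = -\frac{H_b}{b!}$, where $H_b = \sum_{j=1}^{b} 1/j$ is the $b$-th harmonic number. -/
/-!
Since `1 / ((b - c)! c!) = C(b, c) / b!`, the claim is the classical identity
`∑_{c=1}^{b} (-1)^c C(b, c) / c = -H_b`. It follows by induction on `b`: Pascal's rule and the
absorption identity `(b + 1) C(b, c - 1) = c C(b + 1, c)` split the sum for `b + 1` into the sum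
for `b` plus `(∑_{c=1}^{b+1} (-1)^c C(b + 1, c)) / (b + 1) = -1 / (b + 1)`.
-/

open Finset Nat

theorem sum_Icc_one_neg_one_pow_mul_choose {R : Type*} [CommRing R] {n : ℕ} (hn : n ≠ 0) :
    ∑ c ∈ Icc 1 n, (-1 : R) ^ c * n.choose c = -1 := by
  have h := congrArg (Int.cast : ℤ → R) (Int.alternating_sum_range_choose_of_ne hn)
  push_cast at h
  rw [range_eq_Ico, sum_eq_sum_Ico_succ_bot (by omega), Ico_add_one_right_eq_Icc] at h
  simp only [pow_zero, choose_zero_right, Nat.cast_one, one_mul, zero_add] at h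
  linear_combination h

theorem cast_choose_succ_div {K : Type*} [Field K] [CharZero K] (n : ℕ) {c : ℕ} (hc : c ≠ 0) :
    ((n + 1).choose c : K) / c = n.choose c / c + (n + 1).choose c / (n + 1) := by
  obtain ⟨k, rfl⟩ := Nat.exists_eq_succ_of_ne_zero hc
  have hpascal : ((n + 1).choose (k + 1) : K) = n.choose k + n.choose (k + 1) := by
    exact_mod_cast Nat.choose_succ_succ' n k
  have habsorb : ((n + 1 : ℕ) : K) * n.choose k = (n + 1).choose (k + 1) * (k + 1 : ℕ) := by
    exact_mod_cast Nat.add_one_mul_choose_eq n k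
  push_cast at habsorb ⊢
  field_simp
  linear_combination habsorb + (↑n + 1) * hpascal

theorem sum_Icc_one_neg_one_pow_mul_choose_div (n : ℕ) :
    ∑ c ∈ Icc 1 n, (-1 : ℚ) ^ c * n.choose c / c = -harmonic n := by
  induction n with
  | zero => simp
  | succ n ih =>
    calc ∑ c ∈ Icc 1 (n + 1), (-1 : ℚ) ^ c * (n + 1).choose c / c
        = ∑ c ∈ Icc 1 (n + 1), (-1 : ℚ) ^ c * n.choose c / c
          + (∑ c ∈ Icc 1 (n + 1), (-1 : ℚ) ^ c * (n + 1).choose c) / (n + 1) := by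
          rw [sum_div, ← sum_add_distrib]
          refine sum_congr rfl fun c hc => ?_
          rw [mul_div_assoc, mul_div_assoc, mul_div_assoc,
            cast_choose_succ_div n (by grind)]
          ring
      _ = -harmonic (n + 1) := by
          rw [sum_Icc_succ_top (by omega), choose_succ_self,
            sum_Icc_one_neg_one_pow_mul_choose n.succ_ne_zero, ih, harmonic_succ]
          push_cast
          ring

theorem stmt0_general (b : ℕ) :
    ∑ c ∈ Finset.Icc 1 b,
      ((-1 : ℚ) ^ c / ((Nat.factorial (b - c) : ℚ) * (Nat.factorial c : ℚ) * (c : ℚ)))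
      = - harmonic b / (Nat.factorial b : ℚ) := by
  rw [← sum_Icc_one_neg_one_pow_mul_choose_div, sum_div]
  refine sum_congr rfl fun c hc => ?_
  rw [Nat.cast_choose ℚ (mem_Icc.1 hc).2]
  field_simp

/-- For any positive integer `b`,
`∑_{c=1}^{b} (-1)^c / ((b-c)! c! c) = - H_b / b!`, where `H_b` is the `b`-th harmonic number. -/
theorem stmt0 (b : ℕ) (hb : 0 < b) :
    ∑ c ∈ Finset.Icc 1 b,
      ((-1 : ℚ) ^ c / ((Nat.factorial (b - c) : ℚ) * (Nat.factorial c : ℚ) * (c : ℚ)))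
      = - harmonic b / (Nat.factorial b : ℚ) :=
  stmt0_general b
end

section
/- For any nonnegative integers $m$ and $c$ with $c \le m$, the sum $\tilde{K}_{m,c} := \sum_{b=0}^{c} \frac{(m+1-b)\,(2m+2)!}{b!\,(2m+2-b)!}$ equals $\frac{1}{2}\,\frac{(2m+2)!}{c!\,(2m+1-c)!}$. -/
/-!
With `N = 2m + 2`, the summand is `(N - 2b) / 2 · C(N, b)`, and by Pascal's rule together with
`b · C(N, b) = N · C(N - 1, b - 1)` one has `(N - 2b) · C(N, b) = N · (C(N - 1, b) - C(N - 1, b - 1))`.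
The sum therefore telescopes to `N / 2 · C(N - 1, c)`, which is the right-hand side.
-/

open Finset

theorem sum_range_sub_two_mul_mul_choose {R : Type*} [CommRing R] (n c : ℕ) :
    ∑ b ∈ range (c + 1), ((n + 1 : R) - 2 * b) * (n + 1).choose b = (n + 1) * n.choose c := by
  induction c with
  | zero => simp
  | succ c ih =>
    rw [sum_range_succ, ih]
    have pascal : ((n + 1).choose (c + 1) : R) = n.choose c + n.choose (c + 1) := by
      rw [Nat.choose_succ_succ', Nat.cast_add]
    have absorb : (n + 1 : R) * n.choose c = (n + 1).choose (c + 1) * (c + 1) := by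
      exact_mod_cast congrArg (Nat.cast : ℕ → R) (Nat.add_one_mul_choose_eq n c)
    push_cast
    linear_combination (n + 1 : R) * pascal + 2 * absorb

/-- For `0 ≤ c ≤ m`,
`∑_{b=0}^{c} (m+1-b)(2m+2)! / (b! (2m+2-b)!) = (1/2) (2m+2)! / (c! (2m+1-c)!)`. -/
theorem stmt1 (m c : ℕ) (h : c ≤ m) :
    ∑ b ∈ Finset.range (c + 1),
      (((m + 1 - b : ℕ) : ℚ) * (Nat.factorial (2 * m + 2) : ℚ) /
        ((Nat.factorial b : ℚ) * (Nat.factorial (2 * m + 2 - b) : ℚ)))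
      = (1 / 2) * (Nat.factorial (2 * m + 2) : ℚ) /
          ((Nat.factorial c : ℚ) * (Nat.factorial (2 * m + 1 - c) : ℚ)) := by
  have hterm : ∀ b ∈ range (c + 1),
      ((m + 1 - b : ℕ) : ℚ) * (2 * m + 2).factorial / (b.factorial * (2 * m + 2 - b).factorial)
        = ((2 * m + 1 + 1 : ℚ) - 2 * b) * (2 * m + 1 + 1).choose b / 2 := by
    intro b hb
    have hbm : b ≤ m + 1 := by rw [mem_range] at hb; omega
    rw [Nat.cast_choose ℚ (by omega : b ≤ 2 * m + 1 + 1), Nat.cast_sub hbm]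
    push_cast
    ring
  have hrhs : (1 / 2) * ((2 * m + 2).factorial : ℚ) / (c.factorial * (2 * m + 1 - c).factorial)
      = (2 * m + 1 + 1 : ℚ) * (2 * m + 1).choose c / 2 := by
    rw [Nat.cast_choose ℚ (by omega : c ≤ 2 * m + 1), Nat.factorial_succ]
    push_cast
    ring
  rw [sum_congr rfl hterm, ← sum_div, hrhs]
  exact_mod_cast congrArg (· / (2 : ℚ)) (sum_range_sub_two_mul_mul_choose (2 * m + 1) c)
end

section
/- For any nonnegative integer $m$, $\sum_{a=0}^{m} \frac{(a+1)\,(2m+2)!}{(m-a)!\,(m+2+a)!} = \frac{(2m+1)!}{(m!)^2}$. -/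
/-!
Each summand is `(a + 1) * C(2m+2, m-a)`; reversing the order of summation turns the sum into
`∑_{i ≤ m} (m + 1 - i) * C(2m+2, i)`. The weights `n - 2i` telescope against binomial
coefficients: `(n - 2i) * C(n, i) = n * (C(n-1, i) - C(n-1, i-1))`, so the sum collapses to
`(m + 1) * C(2m+1, m) = (2m+1)! / (m!)^2`.
-/

open Finset

theorem sum_range_succ_sub_two_mul_mul_choose {R : Type*} [CommRing R] (N k : ℕ) :
    ∑ i ∈ range (k + 1), ((N + 1 : R) - 2 * i) * (N + 1).choose i =
      (N + 1) * N.choose k := by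
  induction k with
  | zero => simp
  | succ k ih =>
    rw [sum_range_succ, ih]
    have hpascal := congrArg (Nat.cast : ℕ → R) (Nat.choose_succ_succ' N k)
    have habsorb := congrArg (Nat.cast : ℕ → R) (Nat.add_one_mul_choose_eq N k)
    push_cast at hpascal habsorb ⊢
    linear_combination (N + 1 : R) * hpascal + 2 * habsorb

theorem add_one_mul_factorial_div_eq_choose {m a : ℕ} (ha : a ≤ m) :
    ((a + 1 : ℕ) : ℚ) * (2 * m + 2).factorial / ((m - a).factorial * (m + 2 + a).factorial) =
      ((m + 1 : ℚ) - (m - a : ℕ)) * (2 * m + 2).choose (m - a) := by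
  rw [Nat.cast_choose ℚ (by omega : m - a ≤ 2 * m + 2),
    show 2 * m + 2 - (m - a) = m + 2 + a by omega, Nat.cast_sub ha]
  push_cast
  ring

theorem add_one_mul_choose_eq_factorial_div (m : ℕ) :
    (m + 1 : ℚ) * (2 * m + 1).choose m = (2 * m + 1).factorial / (m.factorial : ℚ) ^ 2 := by
  rw [Nat.cast_choose ℚ (by omega : m ≤ 2 * m + 1), show 2 * m + 1 - m = m + 1 by omega,
    Nat.factorial_succ m]
  push_cast
  field_simp

theorem sum_range_succ_sub_mul_choose_two_mul_add_two (m : ℕ) :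
    ∑ i ∈ range (m + 1), ((m + 1 : ℚ) - i) * (2 * m + 2).choose i =
      (m + 1) * (2 * m + 1).choose m := by
  have htelescope := sum_range_succ_sub_two_mul_mul_choose (R := ℚ) (2 * m + 1) m
  calc ∑ i ∈ range (m + 1), ((m + 1 : ℚ) - i) * (2 * m + 2).choose i
      = 2⁻¹ * ∑ i ∈ range (m + 1), (((2 * m + 1 : ℕ) : ℚ) + 1 - 2 * i) * (2 * m + 2).choose i := by
        rw [mul_sum]
        refine sum_congr rfl fun i _ ↦ ?_
        push_cast
        ring
    _ = (m + 1) * (2 * m + 1).choose m := by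
        rw [htelescope]
        push_cast
        ring

/-- For any nonnegative integer `m`,
`∑_{a=0}^{m} (a+1)(2m+2)! / ((m-a)! (m+2+a)!) = (2m+1)! / (m!)^2`. -/
theorem stmt2 (m : ℕ) :
    ∑ a ∈ Finset.range (m + 1),
      (((a + 1 : ℕ) : ℚ) * (Nat.factorial (2 * m + 2) : ℚ) /
        ((Nat.factorial (m - a) : ℚ) * (Nat.factorial (m + 2 + a) : ℚ)))
      = (Nat.factorial (2 * m + 1) : ℚ) / ((Nat.factorial m : ℚ)) ^ 2 := by
  have hreflect := sum_range_reflect (fun i ↦ ((m + 1 : ℚ) - i) * (2 * m + 2).choose i) (m + 1)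
  simp only [add_tsub_cancel_right] at hreflect
  rw [sum_congr rfl fun a ha ↦ add_one_mul_factorial_div_eq_choose (mem_range_succ_iff.mp ha),
    hreflect, sum_range_succ_sub_mul_choose_two_mul_add_two, add_one_mul_choose_eq_factorial_div]
end

section
/- Define rational 1-forms $\xi^\alpha_k(z)$ on $\mathbb{C}^*$ for $\alpha \in \{0,1\}$ recursively by $\xi^\alpha_{-1}(z) = z^{-\alpha}\,dz$ and $\xi^\alpha_k = -d\big(\xi^\alpha_{k-1}/dx\big)$ where $x(z) = z + 1/z$. Then for all $m \ge 0$ and $\alpha \in \{0,1\}$, the identity $x(z)\,\xi^\alpha_m(z) = 2\,\xi^{1-\alpha}_m(z) + (m+\alpha)\,\xi^\alpha_{m-1}(z)$ holds as an identity of rational 1-forms, where $\xi^\alpha_{-1}$ is given by the initial data above. -/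
/-!
Write `D f = -d(f / dx)`, so that `ξ^α_k = D ξ^α_{k-1}`. Since `dx / dx = 1`, the Leibniz rule gives
the commutation relation `x · D f = D (x f) + f`. Applying `D` to the identity for `m - 1` and using
this relation yields the identity for `m`. The induction starts from
`x z^{-α} = 2 z^{α-1} + (1 - 2α) z^{1-α} (1 - 1/z²)`, whose last term `D` sends to `-(1-α) z^{-α}`.
Off `{0, 1, -1}` all these functions are holomorphic, so there `deriv` is the true derivative and
identities holding on that open set may be differentiated.
-/

/-- The coefficient (w.r.t. `dz`) of the 1-form `ξ^α_{k-1}`: `xi α 0` is the coefficient of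
`ξ^α_{-1}(z) = z^{-α} dz`, and `xi α (k+1)` is the coefficient of
`ξ^α_k = -d(ξ^α_{k-1}/dx)` where `x(z) = z + 1/z`, `dx = (1 - 1/z^2) dz`. -/
noncomputable def xi (α : ℕ) : ℕ → ℂ → ℂ
  | 0 => fun z => z ^ (-(α : ℤ))
  | (k + 1) => fun z => - deriv (fun w => xi α k w / (1 - 1 / w ^ 2)) z

open Topology

namespace Xi

variable {f g p : ℂ → ℂ} {z : ℂ}

-- The pole `0` of `x` and the zeros `±1` of `dx`.
def Ω : Set ℂ := {0, 1, -1}ᶜ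

noncomputable def joukowski (z : ℂ) : ℂ := z + 1 / z

noncomputable def negDOverDx (f : ℂ → ℂ) (z : ℂ) : ℂ := -deriv (fun w => f w / (1 - 1 / w ^ 2)) z

lemma xi_succ (α k : ℕ) : xi α (k + 1) = negDOverDx (xi α k) := rfl

lemma isOpen_Ω : IsOpen Ω :=
  ((Set.finite_singleton (-1 : ℂ)).insert 1 |>.insert 0).isClosed.isOpen_compl

lemma mem_Ω : z ∈ Ω ↔ z ≠ 0 ∧ z ≠ 1 ∧ z ≠ -1 := by
  simp [Ω]

lemma ne_zero_of_mem_Ω (hz : z ∈ Ω) : z ≠ 0 := (mem_Ω.mp hz).1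

lemma one_sub_one_div_sq_ne_zero (hz : z ∈ Ω) : 1 - 1 / z ^ 2 ≠ 0 := by
  obtain ⟨h0, h1, h2⟩ := mem_Ω.mp hz
  have hfactor : 1 - 1 / z ^ 2 = (z - 1) * (z + 1) / z ^ 2 := by
    field_simp
    ring
  rw [hfactor]
  exact div_ne_zero (mul_ne_zero (sub_ne_zero.mpr h1) (by simpa [add_eq_zero_iff_eq_neg] using h2))
    (pow_ne_zero 2 h0)

lemma hasDerivAt_joukowski (hz : z ≠ 0) : HasDerivAt joukowski (1 - 1 / z ^ 2) z := by
  have hj : joukowski = (fun w => w) + fun w => w⁻¹ := by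
    funext w
    simp [joukowski]
  rw [hj, one_div, sub_eq_add_neg]
  exact (hasDerivAt_id' z).add (hasDerivAt_inv hz)

lemma analyticOnNhd_one_sub_one_div_sq : AnalyticOnNhd ℂ (fun w : ℂ => 1 - 1 / w ^ 2) Ω :=
  analyticOnNhd_const.sub <| analyticOnNhd_const.div (analyticOnNhd_id.pow 2)
    fun _ hw => pow_ne_zero 2 (ne_zero_of_mem_Ω hw)

lemma analyticOnNhd_div_dx (hf : AnalyticOnNhd ℂ f Ω) :
    AnalyticOnNhd ℂ (fun w => f w / (1 - 1 / w ^ 2)) Ω :=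
  hf.div analyticOnNhd_one_sub_one_div_sq fun _ hw => one_sub_one_div_sq_ne_zero hw

lemma analyticOnNhd_negDOverDx (hf : AnalyticOnNhd ℂ f Ω) :
    AnalyticOnNhd ℂ (negDOverDx f) Ω :=
  (analyticOnNhd_div_dx hf).deriv.neg

lemma analyticOnNhd_xi (α k : ℕ) : AnalyticOnNhd ℂ (xi α k) Ω := by
  induction k with
  | zero =>
    have hxi : xi α 0 = fun z => (z ^ α)⁻¹ := by
      funext z
      simp [xi, zpow_neg, zpow_natCast]
    rw [hxi]
    exact (analyticOnNhd_id.pow α).inv fun _ hw => pow_ne_zero α (ne_zero_of_mem_Ω hw)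
  | succ k ih => exact analyticOnNhd_negDOverDx ih

lemma negDOverDx_congr (h : Set.EqOn f g Ω) (hz : z ∈ Ω) : negDOverDx f z = negDOverDx g z := by
  have hev : (fun w => f w / (1 - 1 / w ^ 2)) =ᶠ[𝓝 z] fun w => g w / (1 - 1 / w ^ 2) := by
    filter_upwards [isOpen_Ω.mem_nhds hz] with w hw
    rw [h hw]
  rw [negDOverDx, negDOverDx, hev.deriv_eq]

lemma negDOverDx_linear (a b : ℂ) (hf : AnalyticOnNhd ℂ f Ω) (hg : AnalyticOnNhd ℂ g Ω)
    (hz : z ∈ Ω) :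
    negDOverDx (fun w => a * f w + b * g w) z = a * negDOverDx f z + b * negDOverDx g z := by
  have hfz := (analyticOnNhd_div_dx hf z hz).differentiableAt
  have hgz := (analyticOnNhd_div_dx hg z hz).differentiableAt
  have hsplit : (fun w => (a * f w + b * g w) / (1 - 1 / w ^ 2))
      = fun w => a * (f w / (1 - 1 / w ^ 2)) + b * (g w / (1 - 1 / w ^ 2)) := by
    funext w
    ring
  rw [negDOverDx, negDOverDx, negDOverDx, hsplit,
    deriv_fun_add (hfz.const_mul a) (hgz.const_mul b), deriv_const_mul a hfz, deriv_const_mul b hgz]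
  ring

lemma joukowski_mul_negDOverDx (hf : AnalyticOnNhd ℂ f Ω) (hz : z ∈ Ω) :
    joukowski z * negDOverDx f z = negDOverDx (fun w => joukowski w * f w) z + f z := by
  have hfz := (analyticOnNhd_div_dx hf z hz).differentiableAt
  have hprod : (fun w => joukowski w * f w / (1 - 1 / w ^ 2))
      = fun w => joukowski w * (f w / (1 - 1 / w ^ 2)) := by
    funext w
    ring
  have hx := hasDerivAt_joukowski (ne_zero_of_mem_Ω hz)
  rw [negDOverDx, negDOverDx, hprod, deriv_fun_mul hx.differentiableAt hfz, hx.deriv,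
    mul_div_cancel₀ _ (one_sub_one_div_sq_ne_zero hz)]
  ring

lemma negDOverDx_mul_dx (h : ℂ → ℂ) (hz : z ∈ Ω) :
    negDOverDx (fun w => h w * (1 - 1 / w ^ 2)) z = -deriv h z := by
  have hev : (fun w => h w * (1 - 1 / w ^ 2) / (1 - 1 / w ^ 2)) =ᶠ[𝓝 z] h := by
    filter_upwards [isOpen_Ω.mem_nhds hz] with w hw
    exact mul_div_cancel_right₀ _ (one_sub_one_div_sq_ne_zero hw)
  rw [negDOverDx, hev.deriv_eq]

lemma joukowski_mul_negDOverDx_of_eqOn {c : ℂ} (hf : AnalyticOnNhd ℂ f Ω)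
    (hg : AnalyticOnNhd ℂ g Ω) (hp : AnalyticOnNhd ℂ p Ω)
    (h : Set.EqOn (fun w => joukowski w * f w) (fun w => 2 * g w + c * p w) Ω) (hz : z ∈ Ω) :
    joukowski z * negDOverDx f z = 2 * negDOverDx g z + c * negDOverDx p z + f z := by
  rw [joukowski_mul_negDOverDx hf hz, negDOverDx_congr h hz, negDOverDx_linear 2 c hg hp hz]

lemma joukowski_mul_xi_zero {α : ℕ} (hα : α ≤ 1) {w : ℂ} (hw : w ≠ 0) :
    joukowski w * xi α 0 w
      = 2 * xi (1 - α) 0 w + (1 - 2 * (α : ℂ)) * (w ^ (1 - α) * (1 - 1 / w ^ 2)) := by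
  interval_cases α <;>
  · simp only [joukowski, xi, zpow_neg, zpow_natCast]
    field_simp
    ring

lemma joukowski_mul_xi {α : ℕ} (hα : α ≤ 1) (m : ℕ) (hz : z ∈ Ω) :
    joukowski z * xi α (m + 1) z
      = 2 * xi (1 - α) (m + 1) z + ((m : ℂ) + (α : ℂ)) * xi α m z := by
  induction m generalizing z with
  | zero =>
    have hp : AnalyticOnNhd ℂ (fun w : ℂ => w ^ (1 - α) * (1 - 1 / w ^ 2)) Ω :=
      (analyticOnNhd_id.pow _).mul analyticOnNhd_one_sub_one_div_sq
    rw [xi_succ α 0, xi_succ (1 - α) 0,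
      joukowski_mul_negDOverDx_of_eqOn (analyticOnNhd_xi α 0) (analyticOnNhd_xi (1 - α) 0) hp
        (fun w hw => joukowski_mul_xi_zero hα (ne_zero_of_mem_Ω hw)) hz,
      negDOverDx_mul_dx _ hz, deriv_pow_field]
    interval_cases α <;> simp [xi]
  | succ n ih =>
    rw [xi_succ α (n + 1), xi_succ (1 - α) (n + 1),
      joukowski_mul_negDOverDx_of_eqOn (analyticOnNhd_xi α (n + 1))
        (analyticOnNhd_xi (1 - α) (n + 1)) (analyticOnNhd_xi α n) (fun w hw => ih hw) hz,
      ← xi_succ α n]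
    push_cast
    ring

end Xi

open Xi in
/-- For all `m ≥ 0` and `α ∈ {0,1}`,
`x(z) ξ^α_m(z) = 2 ξ^{1-α}_m(z) + (m+α) ξ^α_{m-1}(z)` as rational 1-forms. -/
theorem stmt8 (α : ℕ) (hα : α ≤ 1) (m : ℕ) (z : ℂ)
    (h0 : z ≠ 0) (h1 : z ≠ 1) (h2 : z ≠ -1) :
    (z + 1 / z) * xi α (m + 1) z
      = 2 * xi (1 - α) (m + 1) z + ((m : ℂ) + (α : ℂ)) * xi α m z :=
  joukowski_mul_xi hα m (mem_Ω.mpr ⟨h0, h1, h2⟩)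
end

section
/- With $x(z) = z+1/z$ and $\xi^\alpha_k$ defined recursively by $\xi^\alpha_{-1}(z) = z^{-\alpha}dz$, $\xi^\alpha_k = -d(\xi^\alpha_{k-1}/dx)$, each $\xi^\alpha_k$ for $k \ge 0$ is odd under the involution $z \mapsto 1/z$: $\xi^\alpha_k(1/z) = -\xi^\alpha_k(z)$ (as pullback of 1-forms). -/
open Filter Topology

noncomputable def divDx (f : ℂ → ℂ) : ℂ → ℂ := fun w => f w / (1 - 1 / w ^ 2)

lemma xi_zero (α : ℕ) : xi α 0 = fun z => (z ^ α)⁻¹ :=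
  funext fun z => by rw [← zpow_natCast, ← zpow_neg]; rfl

lemma xi_succ_apply (α k : ℕ) (z : ℂ) : xi α (k + 1) z = -deriv (divDx (xi α k)) z := rfl

section Field

variable {K : Type*} [Field K] {w : K}

lemma ne_zero_of_mem_compl_zero_one_neg_one (hw : w ∈ ({0, 1, -1} : Set K)ᶜ) : w ≠ 0 :=
  fun h => hw (Or.inl h)

lemma inv_mem_compl_zero_one_neg_one (hw : w ∈ ({0, 1, -1} : Set K)ᶜ) :
    w⁻¹ ∈ ({0, 1, -1} : Set K)ᶜ := by
  simp only [Set.mem_compl_iff, Set.mem_insert_iff, Set.mem_singleton_iff, not_or] at hw ⊢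
  refine ⟨inv_ne_zero hw.1, inv_ne_one.2 hw.2.1, ?_⟩
  rw [inv_eq_iff_eq_inv, inv_neg, inv_one]
  exact hw.2.2

lemma sq_sub_one_ne_zero (hw : w ∈ ({0, 1, -1} : Set K)ᶜ) : w ^ 2 - 1 ≠ 0 := by
  simp only [Set.mem_compl_iff, Set.mem_insert_iff, Set.mem_singleton_iff, not_or] at hw
  exact sub_ne_zero.2 (sq_ne_one_iff.2 hw.2)

lemma one_sub_one_div_sq_ne_zero (hw : w ∈ ({0, 1, -1} : Set K)ᶜ) : 1 - 1 / w ^ 2 ≠ 0 := by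
  have hw0 := ne_zero_of_mem_compl_zero_one_neg_one hw
  rw [one_sub_div (pow_ne_zero 2 hw0)]
  exact div_ne_zero (sq_sub_one_ne_zero hw) (pow_ne_zero 2 hw0)

-- `x(1/w) = x(w)`, so `σ*(dx) = dx`.
lemma one_sub_one_div_inv_sq (hw : w ≠ 0) : 1 - 1 / w⁻¹ ^ 2 = -w ^ 2 * (1 - 1 / w ^ 2) := by
  field_simp
  ring

end Field

lemma analyticOnNhd_divDx {f : ℂ → ℂ} (hf : AnalyticOnNhd ℂ f {0, 1, -1}ᶜ) :
    AnalyticOnNhd ℂ (divDx f) {0, 1, -1}ᶜ := fun w hw =>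
  (hf w hw).div (analyticAt_const.sub (analyticAt_const.div (analyticAt_id.pow 2)
    (pow_ne_zero 2 (ne_zero_of_mem_compl_zero_one_neg_one hw)))) (one_sub_one_div_sq_ne_zero hw)

lemma analyticOnNhd_xi (α k : ℕ) : AnalyticOnNhd ℂ (xi α k) {0, 1, -1}ᶜ := by
  induction k with
  | zero =>
    rw [xi_zero]
    exact fun w hw =>
      (analyticAt_id.pow α).inv (pow_ne_zero α (ne_zero_of_mem_compl_zero_one_neg_one hw))
  | succ k ih => exact fun w hw => ((analyticOnNhd_divDx ih).deriv w hw).neg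

theorem deriv_odd_of_comp_inv_eventuallyEq_const_sub {𝕜 : Type*} [NontriviallyNormedField 𝕜]
    {F : 𝕜 → 𝕜} {c z : 𝕜} (hz : z ≠ 0) (hF : DifferentiableAt 𝕜 F z⁻¹)
    (h : (fun w => F w⁻¹) =ᶠ[𝓝 z] fun w => c - F w) :
    deriv F z⁻¹ * -(z ^ 2)⁻¹ = -deriv F z :=
  calc deriv F z⁻¹ * -(z ^ 2)⁻¹ = deriv (fun w => F w⁻¹) z :=
        ((hF.hasDerivAt.comp z (hasDerivAt_inv hz)).deriv).symm
    _ = deriv (fun w => c - F w) z := h.deriv_eq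
    _ = -deriv F z := deriv_const_sub c

lemma xi_succ_odd_of_divDx_comp_inv {α k : ℕ} {c : ℂ}
    (h : ∀ w ∈ ({0, 1, -1} : Set ℂ)ᶜ, divDx (xi α k) w⁻¹ = c - divDx (xi α k) w)
    {z : ℂ} (hz : z ∈ ({0, 1, -1} : Set ℂ)ᶜ) :
    xi α (k + 1) z⁻¹ * -(z ^ 2)⁻¹ = -xi α (k + 1) z := by
  have hopen : IsOpen ({0, 1, -1} : Set ℂ)ᶜ := (Set.toFinite _).isClosed.isOpen_compl
  rw [xi_succ_apply, xi_succ_apply, neg_mul, neg_inj]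
  refine deriv_odd_of_comp_inv_eventuallyEq_const_sub (c := c)
    (ne_zero_of_mem_compl_zero_one_neg_one hz) ?_ ?_
  · exact (analyticOnNhd_divDx (analyticOnNhd_xi α k) _
      (inv_mem_compl_zero_one_neg_one hz)).differentiableAt
  · filter_upwards [hopen.mem_nhds hz] using h

lemma divDx_xi_zero_inv {α : ℕ} (hα : α ≤ 2) {w : ℂ} (hw : w ∈ ({0, 1, -1} : Set ℂ)ᶜ) :
    divDx (xi α 0) w⁻¹ = (1 - α) - divDx (xi α 0) w := by
  have hw0 := ne_zero_of_mem_compl_zero_one_neg_one hw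
  have hw1 := sq_sub_one_ne_zero hw
  simp only [divDx, xi_zero]
  rw [one_sub_one_div_inv_sq hw0, inv_pow, inv_inv]
  interval_cases α <;> field_simp <;> ring

lemma divDx_inv_of_odd {f : ℂ → ℂ} {w : ℂ} (hw : w ≠ 0)
    (hf : f w⁻¹ * -(w ^ 2)⁻¹ = -f w) : divDx f w⁻¹ = -divDx f w := by
  have hfw : f w⁻¹ = w ^ 2 * f w := by
    rw [← neg_neg (f w), ← hf]
    field_simp
  rw [divDx, divDx, hfw, one_sub_one_div_inv_sq hw, neg_mul, div_neg,
    mul_div_mul_left _ _ (pow_ne_zero 2 hw)]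

theorem xi_succ_odd {α : ℕ} (hα : α ≤ 2) (k : ℕ) {z : ℂ} (hz : z ∈ ({0, 1, -1} : Set ℂ)ᶜ) :
    xi α (k + 1) z⁻¹ * -(z ^ 2)⁻¹ = -xi α (k + 1) z := by
  induction k generalizing z with
  | zero => exact xi_succ_odd_of_divDx_comp_inv (fun w hw => divDx_xi_zero_inv hα hw) hz
  | succ k ih =>
    refine xi_succ_odd_of_divDx_comp_inv (c := 0) (fun w hw => ?_) hz
    rw [zero_sub]
    exact divDx_inv_of_odd (ne_zero_of_mem_compl_zero_one_neg_one hw) (ih hw)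

/-- For `k ≥ 0`, `ξ^α_k` is odd under `z ↦ 1/z`: the pullback of `ξ^α_k` under
`σ(z) = 1/z`, whose coefficient is `xi α (k+1) (1/z) · (-1/z^2)`, equals `-ξ^α_k`. -/
theorem stmt9 (α : ℕ) (hα : α ≤ 1) (k : ℕ) (z : ℂ)
    (h0 : z ≠ 0) (h1 : z ≠ 1) (h2 : z ≠ -1) :
    xi α (k + 1) (1 / z) * (-(1 / z ^ 2)) = - xi α (k + 1) z := by
  have hz : z ∈ ({0, 1, -1} : Set ℂ)ᶜ := by simp [h0, h1, h2]
  simpa only [one_div] using xi_succ_odd (hα.trans one_le_two) k hz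
end

section
/- For the Gamma function, the limit $\lim_{\epsilon \to 0^+}\left(\frac{\Gamma(\epsilon)}{\Gamma(\epsilon+b+1)} - \frac{1}{b!\,\epsilon}\right) = -\frac{H_b}{b!}$ holds for every nonnegative integer $b$, where $H_b$ is the $b$-th harmonic number. -/
open Filter

/-- For every nonnegative integer `b`,
`lim_{ε → 0⁺} (Γ(ε)/Γ(ε+b+1) - 1/(b! ε)) = -H_b/b!`. -/
theorem stmt15 (b : ℕ) :
    Tendsto (fun ε : ℝ =>
        Real.Gamma ε / Real.Gamma (ε + b + 1) - 1 / ((Nat.factorial b : ℝ) * ε))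
      (nhdsWithin 0 (Set.Ioi 0))
      (nhds (-((harmonic b : ℚ) : ℝ) / (Nat.factorial b : ℝ))) := by
  induction b with
  | zero =>
    have heq : ∀ᶠ ε in nhdsWithin (0:ℝ) (Set.Ioi 0),
        Real.Gamma ε / Real.Gamma (ε + (0:ℕ) + 1) - 1 / ((Nat.factorial 0 : ℝ) * ε) = 0 := by
      filter_upwards [self_mem_nhdsWithin] with ε (hε : ε ∈ Set.Ioi 0)
      have hε0 : (0:ℝ) < ε := hε
      have h1 : Real.Gamma (ε + (0:ℕ) + 1) = ε * Real.Gamma ε := by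
        have := Real.Gamma_add_one (ne_of_gt hε0)
        simpa using this
      have hΓ : Real.Gamma ε ≠ 0 := ne_of_gt (Real.Gamma_pos_of_pos hε0)
      rw [h1]
      field_simp
      ring
    rw [tendsto_congr' heq]
    simpa using tendsto_const_nhds
  | succ b ih =>
    have hinv : Tendsto (fun ε : ℝ => (ε + b + 1)⁻¹) (nhdsWithin 0 (Set.Ioi 0))
        (nhds (((b:ℝ) + 1)⁻¹)) := by
      have hc : ContinuousAt (fun ε : ℝ => (ε + b + 1)⁻¹) 0 := by
        apply ContinuousAt.inv₀ (by fun_prop)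
        positivity
      have h0 : ((0:ℝ) + b + 1)⁻¹ = ((b:ℝ)+1)⁻¹ := by norm_num
      exact h0 ▸ (hc.continuousWithinAt (s := Set.Ioi 0))
    have hinv2 : Tendsto (fun ε : ℝ => ((Nat.factorial (b+1) : ℝ) * (ε + b + 1))⁻¹)
        (nhdsWithin 0 (Set.Ioi 0))
        (nhds (((Nat.factorial (b+1) : ℝ) * ((b:ℝ) + 1))⁻¹)) := by
      have hc : ContinuousAt (fun ε : ℝ => ((Nat.factorial (b+1) : ℝ) * (ε + b + 1))⁻¹) 0 := by
        apply ContinuousAt.inv₀ (by fun_prop)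
        positivity
      have h0 : ((Nat.factorial (b+1) : ℝ) * ((0:ℝ) + b + 1))⁻¹
          = ((Nat.factorial (b+1) : ℝ) * ((b:ℝ)+1))⁻¹ := by norm_num
      exact h0 ▸ (hc.continuousWithinAt (s := Set.Ioi 0))
    have hmain : Tendsto (fun ε : ℝ =>
        (Real.Gamma ε / Real.Gamma (ε + b + 1) - 1 / ((Nat.factorial b : ℝ) * ε)) * (ε + b + 1)⁻¹
          - ((Nat.factorial (b+1) : ℝ) * (ε + b + 1))⁻¹)
        (nhdsWithin 0 (Set.Ioi 0))
        (nhds ((-((harmonic b : ℚ) : ℝ) / (Nat.factorial b : ℝ)) * ((b:ℝ) + 1)⁻¹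
          - ((Nat.factorial (b+1) : ℝ) * ((b:ℝ) + 1))⁻¹)) := (ih.mul hinv).sub hinv2
    have heq : ∀ᶠ ε in nhdsWithin (0:ℝ) (Set.Ioi 0),
        (Real.Gamma ε / Real.Gamma (ε + b + 1) - 1 / ((Nat.factorial b : ℝ) * ε)) * (ε + b + 1)⁻¹
          - ((Nat.factorial (b+1) : ℝ) * (ε + b + 1))⁻¹
        = Real.Gamma ε / Real.Gamma (ε + (b+1:ℕ) + 1) - 1 / ((Nat.factorial (b+1) : ℝ) * ε) := by
      filter_upwards [self_mem_nhdsWithin] with ε (hε : ε ∈ Set.Ioi 0)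
      have hε0 : (0:ℝ) < ε := hε
      have hb1 : (0:ℝ) < ε + b + 1 := by positivity
      have hG : Real.Gamma (ε + (b+1:ℕ) + 1) = (ε + b + 1) * Real.Gamma (ε + b + 1) := by
        have h := Real.Gamma_add_one (ne_of_gt hb1)
        push_cast
        rw [show ε + ((b:ℝ) + 1) + 1 = (ε + b + 1) + 1 by ring, h]
      have hΓ : Real.Gamma (ε + b + 1) ≠ 0 := ne_of_gt (Real.Gamma_pos_of_pos hb1)
      have hfac : (Nat.factorial b : ℝ) ≠ 0 := Nat.cast_ne_zero.2 (Nat.factorial_ne_zero b)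
      have hfacs : (Nat.factorial (b+1) : ℝ) = ((b:ℝ)+1) * (Nat.factorial b : ℝ) := by
        rw [Nat.factorial_succ]; push_cast; ring
      rw [hG, hfacs]
      field_simp
      ring
    rw [tendsto_congr' heq] at hmain
    convert hmain using 2
    have hfacs : (Nat.factorial (b+1) : ℝ) = ((b:ℝ)+1) * (Nat.factorial b : ℝ) := by
      rw [Nat.factorial_succ]; push_cast; ring
    rw [harmonic_succ]
    have hfac : (Nat.factorial b : ℝ) ≠ 0 := Nat.cast_ne_zero.2 (Nat.factorial_ne_zero b)
    have hb1 : ((b:ℝ)+1) ≠ 0 := by positivity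
    push_cast
    rw [hfacs]
    field_simp
    ring
end

section
/- For $m \ge 0$, the residue identity $\operatorname{Res}_{t=0}\left[\frac{dt}{t^{m+1}(1-4t)^{3/2}}\ln\left(\frac{2}{1+\sqrt{1-4t}}\right)\right] = \operatorname{Res}_{v=0}\left[\frac{(1+v)^{2m+2}\ln(1+v)}{v^{m+1}(1-v)^2}\,dv\right]$ holds, i.e., the $m$-th Taylor coefficient of $(1-4t)^{-3/2}\ln(2/(1+\sqrt{1-4t}))$ equals the coefficient of $v^m$ in $\frac{(1+v)^{2m+2}\ln(1+v)}{(1-v)^2}$. -/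
/-!
Under `t = v/(1+v)^2` one has `√(1-4t) = (1-v)/(1+v)` and `2/(1+√(1-4t)) = 1+v`, so
`g(v) = f(t) ψ(v)` with `ψ(v) = (1-v)(1+v)^(2m-1) = v^(m+1) t'(v)/t^(m+1)`: the identity is a
change of variables in the residue.

To extract coefficients, expand `f` to order `m`: the error is `O(t^(m+1)) = O(v^(m+1))`. For
`k < m`, `t^k ψ(v) = v^k (1-v)(1+v)^(2(m-k)-1)` is a polynomial whose `v^m`-coefficient is
`C(2n-1, n) - C(2n-1, n-1) = 0` (`n = m-k`), while `t^m ψ(v) = v^m (1-v)/(1+v) = v^m + O(v^(m+1))`.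
-/

open Filter Topology Asymptotics Polynomial

section

variable {𝕜 E : Type*} [NontriviallyNormedField 𝕜] [NormedAddCommGroup E] [NormedSpace 𝕜 E]

theorem HasFPowerSeriesAt.coeff_eq_zero_of_isBigO {f : 𝕜 → E}
    {p : FormalMultilinearSeries 𝕜 𝕜 E} {n : ℕ} (hp : HasFPowerSeriesAt f p 0)
    (hf : f =O[𝓝[≠] 0] (· ^ n)) {i : ℕ} (hi : i < n) : p.coeff i = 0 := by
  induction n generalizing f p i with
  | zero => exact absurd hi (Nat.not_lt_zero i)
  | succ n ih =>
    have hf0 : f 0 = 0 := by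
      have hlim : Tendsto (fun z : 𝕜 => z ^ (n + 1)) (𝓝[≠] 0) (𝓝 0) :=
        ((continuous_pow (n + 1)).tendsto' 0 0 (zero_pow n.succ_ne_zero)).mono_left
          nhdsWithin_le_nhds
      exact tendsto_nhds_unique (hp.continuousAt.tendsto.mono_left nhdsWithin_le_nhds)
        (hf.trans_tendsto hlim)
    rcases i with _ | i
    · exact (hp.coeff_zero 1).trans hf0
    · have hslope : dslope f 0 =O[𝓝[≠] 0] (· ^ n) := by
        have := (isBigO_refl (fun z : 𝕜 => z⁻¹) (𝓝[≠] 0)).smul hf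
        refine this.congr' ?_ ?_
        · filter_upwards [self_mem_nhdsWithin] with z hz
          rw [dslope_of_ne _ hz, slope_def_module, hf0, sub_zero, sub_zero]
        · filter_upwards [self_mem_nhdsWithin] with z hz
          rw [smul_eq_mul, pow_succ', inv_mul_cancel_left₀ hz]
      rw [← FormalMultilinearSeries.coeff_fslope]
      exact ih hp.has_fpower_series_dslope_fslope hslope (by omega)

theorem Polynomial.hasFPowerSeriesAt_eval (P : 𝕜[X]) :
    HasFPowerSeriesAt (fun z => P.eval z) (FormalMultilinearSeries.ofScalars 𝕜 P.coeff) 0 := by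
  have hrad : (FormalMultilinearSeries.ofScalars 𝕜 P.coeff).radius = ⊤ :=
    FormalMultilinearSeries.radius_eq_top_of_forall_image_add_eq_zero _ (P.natDegree + 1)
      fun k => FormalMultilinearSeries.ofScalars_eq_zero_of_scalar_zero _
        (coeff_eq_zero_of_natDegree_lt (by omega))
  refine ⟨⊤, hrad.ge, ENNReal.zero_lt_top, fun {y} _ => ?_⟩
  simp only [FormalMultilinearSeries.ofScalars_apply_eq, zero_add, smul_eq_mul,
    eval_eq_sum_range]
  exact hasSum_sum_of_ne_finset_zero fun k hk => by
    rw [coeff_eq_zero_of_natDegree_lt (by simpa using hk), zero_mul]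

theorem HasFPowerSeriesAt.coeff_eq_coeff_of_isBigO {f : 𝕜 → 𝕜}
    {p : FormalMultilinearSeries 𝕜 𝕜 𝕜} {P : 𝕜[X]} {n i : ℕ} (hp : HasFPowerSeriesAt f p 0)
    (hi : i < n) (hf : (fun z => f z - P.eval z) =O[𝓝[≠] 0] (· ^ n)) :
    p.coeff i = P.coeff i := by
  have := (hp.sub P.hasFPowerSeriesAt_eval).coeff_eq_zero_of_isBigO hf hi
  rwa [FormalMultilinearSeries.coeff, FormalMultilinearSeries.sub_apply, sub_apply,
    ← FormalMultilinearSeries.coeff, ← FormalMultilinearSeries.coeff,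
    FormalMultilinearSeries.coeff_ofScalars, sub_eq_zero] at this

theorem HasFPowerSeriesAt.isBigO_comp_sub_sum {f : 𝕜 → E} {p : FormalMultilinearSeries 𝕜 𝕜 E}
    {α : Type*} {l : Filter α} {φ ψ : α → 𝕜} (hp : HasFPowerSeriesAt f p 0)
    (hφ : φ =O[l] ψ) (hψ : Tendsto ψ l (𝓝 0)) (n : ℕ) :
    (fun a => f (φ a) - ∑ k ∈ Finset.range n, φ a ^ k • p.coeff k) =O[l] (fun a => ψ a ^ n) := by
  have hT := (hp.isBigO_sub_partialSum_pow n).comp_tendsto (hφ.trans_tendsto hψ)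
  simp only [Function.comp_def, zero_add, FormalMultilinearSeries.partialSum,
    p.apply_eq_pow_smul_coeff] at hT
  refine hT.trans ?_
  simpa only [norm_pow] using (hφ.pow n).norm_left

theorem Polynomial.coeff_one_sub_X_mul_X_add_one_pow {R : Type*} [CommRing R] (n : ℕ) :
    ((1 - X) * (X + 1) ^ (2 * n + 1) : R[X]).coeff (n + 1) = 0 := by
  rw [sub_mul, one_mul, coeff_sub, coeff_X_mul, coeff_X_add_one_pow, coeff_X_add_one_pow,
    Nat.choose_symm_half, sub_self]

theorem Polynomial.coeff_X_pow_mul_one_sub_X_mul_X_add_one_pow {R : Type*} [CommRing R]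
    {k m : ℕ} (hk : k < m) :
    (X ^ k * ((1 - X) * (X + 1) ^ (2 * (m - k) - 1)) : R[X]).coeff m = 0 := by
  obtain ⟨j, rfl⟩ := Nat.exists_eq_add_of_lt hk
  rw [show k + j + 1 = j + 1 + k by ring, coeff_X_pow_mul, Nat.add_sub_cancel,
    show 2 * (j + 1) - 1 = 2 * j + 1 by omega, coeff_one_sub_X_mul_X_add_one_pow]

theorem div_one_add_sq_pow_mul {v : 𝕜} (hv : 1 + v ≠ 0) {k m : ℕ} (hk : k < m) :
    (v / (1 + v) ^ 2) ^ k * ((1 - v) * (1 + v) ^ (2 * m + 2) / (1 + v) ^ 3)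
      = v ^ k * ((1 - v) * (v + 1) ^ (2 * (m - k) - 1)) := by
  obtain ⟨j, rfl⟩ := Nat.exists_eq_add_of_lt hk
  rw [show 2 * (k + j + 1 - k) - 1 = 2 * j + 1 by omega,
    show 2 * (k + j + 1) + 2 = 2 * k + (2 * j + 1) + 3 by ring, div_pow, ← pow_mul,
    pow_add, pow_add]
  field_simp
  ring

theorem div_one_add_sq_pow_self_mul {v : 𝕜} (hv : 1 + v ≠ 0) (m : ℕ) :
    (v / (1 + v) ^ 2) ^ m * ((1 - v) * (1 + v) ^ (2 * m + 2) / (1 + v) ^ 3)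
      = v ^ m - 2 * v ^ (m + 1) / (1 + v) := by
  rw [div_pow, ← pow_mul, pow_add]
  field_simp
  ring

/-- The polynomial part of `(∑_{k ≤ m} c k t^k) ψ(v)` at `t = v/(1+v)^2`, with
`ψ(v) = (1-v)(1+v)^(2m-1)`: the `k = m` term `c m v^m (1-v)/(1+v)` is truncated to `c m v^m`. -/
noncomputable def substPoly (c : ℕ → 𝕜) (m : ℕ) : 𝕜[X] :=
  ∑ k ∈ Finset.range m, C (c k) * (X ^ k * ((1 - X) * (X + 1) ^ (2 * (m - k) - 1)))
    + C (c m) * X ^ m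

theorem coeff_substPoly_self (c : ℕ → 𝕜) (m : ℕ) : (substPoly c m).coeff m = c m := by
  simp only [substPoly, coeff_add, finsetSum_coeff, coeff_C_mul, coeff_X_pow_self, mul_one]
  rw [Finset.sum_eq_zero fun k hk => by
    rw [coeff_X_pow_mul_one_sub_X_mul_X_add_one_pow (Finset.mem_range.1 hk), mul_zero], zero_add]

theorem sum_div_one_add_sq_pow_mul_eq_eval_substPoly (c : ℕ → 𝕜) (m : ℕ) {v : 𝕜}
    (hv : 1 + v ≠ 0) :
    (∑ k ∈ Finset.range (m + 1), (v / (1 + v) ^ 2) ^ k • c k)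
        * ((1 - v) * (1 + v) ^ (2 * m + 2) / (1 + v) ^ 3)
      = (substPoly c m).eval v + v ^ (m + 1) * (-2 * c m / (1 + v)) := by
  simp only [substPoly, eval_add, eval_finsetSum, eval_mul, eval_C, eval_pow, eval_X, eval_sub,
    eval_one, smul_eq_mul, Finset.sum_range_succ, add_mul, Finset.sum_mul]
  rw [Finset.sum_congr rfl fun k hk => by
    rw [mul_comm _ (c k), mul_assoc, div_one_add_sq_pow_mul hv (Finset.mem_range.1 hk)],
    mul_comm _ (c m), mul_assoc, div_one_add_sq_pow_self_mul hv]
  ring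

theorem HasFPowerSeriesAt.coeff_eq_of_eventuallyEq_comp_div_one_add_sq {f g : 𝕜 → 𝕜}
    {p q : FormalMultilinearSeries 𝕜 𝕜 𝕜} (m : ℕ) (hp : HasFPowerSeriesAt f p 0)
    (hq : HasFPowerSeriesAt g q 0)
    (hg : ∀ᶠ v in 𝓝 0,
      g v = f (v / (1 + v) ^ 2) * ((1 - v) * (1 + v) ^ (2 * m + 2) / (1 + v) ^ 3)) :
    q.coeff m = p.coeff m := by
  have hne : ∀ᶠ v in 𝓝 (0 : 𝕜), 1 + v ≠ 0 :=
    (continuousAt_const.add continuousAt_id).eventually_ne (by norm_num)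
  have hφ : (fun v : 𝕜 => v / (1 + v) ^ 2) =O[𝓝 0] (fun v => v) := by
    have : ContinuousAt (fun v : 𝕜 => ((1 + v) ^ 2)⁻¹) 0 :=
      ((continuousAt_const.add continuousAt_id).pow 2).inv₀ (by norm_num)
    simpa [div_eq_mul_inv] using (isBigO_refl (fun v : 𝕜 => v) (𝓝 0)).mul (this.isBigO_one 𝕜)
  have hψ : (fun v : 𝕜 => (1 - v) * (1 + v) ^ (2 * m + 2) / (1 + v) ^ 3)
      =O[𝓝 0] (fun _ => (1 : 𝕜)) := by
    have : ContinuousAt (fun v : 𝕜 => (1 - v) * (1 + v) ^ (2 * m + 2) / (1 + v) ^ 3) 0 := by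
      refine ContinuousAt.div ?_ ?_ (by norm_num) <;> fun_prop
    exact this.isBigO_one 𝕜
  have hrem : (fun v : 𝕜 => v ^ (m + 1) * (-2 * p.coeff m / (1 + v))) =O[𝓝 0] (· ^ (m + 1)) := by
    have : ContinuousAt (fun v : 𝕜 => -2 * p.coeff m / (1 + v)) 0 :=
      continuousAt_const.div (continuousAt_const.add continuousAt_id) (by norm_num)
    simpa using (isBigO_refl (· ^ (m + 1)) (𝓝 (0 : 𝕜))).mul (this.isBigO_one 𝕜)
  have htaylor := (hp.isBigO_comp_sub_sum hφ tendsto_id (m + 1)).mul hψ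
  simp only [mul_one] at htaylor
  rw [← coeff_substPoly_self p.coeff m]
  refine hq.coeff_eq_coeff_of_isBigO (Nat.lt_succ_self m)
    (((htaylor.add hrem).congr' ?_ EventuallyEq.rfl).mono nhdsWithin_le_nhds)
  filter_upwards [hg, hne] with v hgv hv
  rw [hgv]
  linear_combination -sum_div_one_add_sq_pow_mul_eq_eval_substPoly p.coeff m hv

theorem one_sub_four_mul_div_one_add_sq {v : 𝕜} (hv : 1 + v ≠ 0) :
    1 - 4 * (v / (1 + v) ^ 2) = ((1 - v) / (1 + v)) ^ 2 := by
  field_simp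
  ring

end

theorem Real.sq_rpow_neg_three_div_two {x : ℝ} (hx : 0 ≤ x) :
    (x ^ 2) ^ (-(3 : ℝ) / 2) = (x ^ 3)⁻¹ := by
  rw [← Real.rpow_natCast x 2, ← Real.rpow_mul hx, show ((2 : ℕ) : ℝ) * (-3 / 2) = -(3 : ℕ) by
    norm_num, Real.rpow_neg hx, Real.rpow_natCast]

/-- The `m`-th Taylor coefficient at `0` of `(1-4t)^{-3/2} ln(2/(1+√(1-4t)))` equals the
coefficient of `v^m` in `(1+v)^{2m+2} ln(1+v)/(1-v)^2` (the substitution `t = v/(1+v)^2`). -/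
theorem stmt16 (m : ℕ) (f g : ℝ → ℝ) (p q : FormalMultilinearSeries ℝ ℝ ℝ)
    (hf : ∀ᶠ t in nhds (0 : ℝ),
      f t = (1 - 4 * t) ^ (-(3 : ℝ) / 2) * Real.log (2 / (1 + Real.sqrt (1 - 4 * t))))
    (hg : ∀ᶠ v in nhds (0 : ℝ),
      g v = (1 + v) ^ (2 * m + 2) * Real.log (1 + v) / (1 - v) ^ 2)
    (hp : HasFPowerSeriesAt f p 0) (hq : HasFPowerSeriesAt g q 0) :
    p.coeff m = q.coeff m := by
  refine (hp.coeff_eq_of_eventuallyEq_comp_div_one_add_sq m hq ?_).symm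
  have hφ : Tendsto (fun v : ℝ => v / (1 + v) ^ 2) (𝓝 0) (𝓝 0) := by
    have : ContinuousAt (fun v : ℝ => v / (1 + v) ^ 2) 0 := by
      refine ContinuousAt.div ?_ ?_ (by norm_num) <;> fun_prop
    simpa using this.tendsto
  filter_upwards [hg, hφ.eventually hf, Ioo_mem_nhds (by norm_num : (-1 : ℝ) < 0) one_pos]
    with v hgv hfv ⟨hv₁, hv₂⟩
  have hv : 1 + v ≠ 0 := by linarith
  have hx : 0 ≤ (1 - v) / (1 + v) := div_nonneg (by linarith) (by linarith)
  rw [hgv, hfv, one_sub_four_mul_div_one_add_sq hv, Real.sqrt_sq hx,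
    Real.sq_rpow_neg_three_div_two hx, show 2 / (1 + (1 - v) / (1 + v)) = 1 + v by
      field_simp; ring]
  have : 1 - v ≠ 0 := by linarith
  field_simp
end

section
/- With $\xi^\alpha_k$ defined by $\xi^\alpha_{-1}(z)=z^{-\alpha}dz$, $\xi^\alpha_k = -d(\xi^\alpha_{k-1}/dx)$ for $x = z+1/z$, and $\mathcal{I}^1_a[f] = -\operatorname{Res}_{z=\infty}\frac{x^{a+1}}{(a+1)!}f$: the values are $\mathcal{I}^1_{2m}[\xi^1_0] = \frac{1}{(m!)^2}$, $\mathcal{I}^1_{2m+1}[\xi^0_0] = \frac{1}{m!(m+1)!}$, $\mathcal{I}^1_{2m+1}[\xi^1_0] = 0$, and $\mathcal{I}^1_{2m}[\xi^0_0] = 0$ for all $m \ge 0$. -/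
/-!
The form `ξ^α_0` is `-d(z^{-α} / x')` with `x' = 1 - 1/z²`, so integrating by parts against
`x^{N+1}/(N+1)!` turns `x^{N+1}/(N+1)! · ξ^α_0` into `x^N/N! · z^{-α} dz`. Expanding
`(z + 1/z)^N` binomially, only the `z^{-1}` term survives the circle integral: the residue is
`C(N, k)/N! = 1/(k! (N-k)!)` for the `k` with `2k + 1 = N + α`, and `0` when `N + α` is even.
-/

open Complex Metric Finset Real

theorem circleIntegral_mul_deriv {U : Set ℂ} (hU : IsOpen U) {f g : ℂ → ℂ}
    (hf : DifferentiableOn ℂ f U) (hg : DifferentiableOn ℂ g U) {c : ℂ} {R : ℝ} (hR : 0 ≤ R)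
    (hsub : sphere c R ⊆ U) :
    (∮ z in C(c, R), f z * deriv g z) = -∮ z in C(c, R), deriv f z * g z := by
  have hfg' : CircleIntegrable (fun z => f z * deriv g z) c R :=
    ((hf.continuousOn.mul (hg.deriv hU).continuousOn).mono hsub).circleIntegrable hR
  have hf'g : CircleIntegrable (fun z => deriv f z * g z) c R :=
    (((hf.deriv hU).continuousOn.mul hg.continuousOn).mono hsub).circleIntegrable hR
  have hprod : (∮ z in C(c, R), deriv f z * g z + f z * deriv g z) = 0 :=
    circleIntegral.integral_eq_zero_of_hasDerivWithinAt (f := f * g) hR fun z hz =>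
      ((hf.differentiableAt (hU.mem_nhds (hsub hz))).hasDerivAt.mul
        (hg.differentiableAt (hU.mem_nhds (hsub hz))).hasDerivAt).hasDerivWithinAt
  rw [circleIntegral.integral_add hf'g hfg'] at hprod
  linear_combination hprod

theorem circleIntegral_zpow (n : ℤ) {R : ℝ} (hR : 0 < R) :
    (∮ z in C(0, R), z ^ n) = if n = -1 then 2 * π * I else 0 := by
  split_ifs with hn
  · simpa [hn] using circleIntegral.integral_sub_inv_of_mem_ball (c := 0) (mem_ball_self hR)
  · simpa using circleIntegral.integral_sub_zpow_of_ne hn 0 0 R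

theorem add_inv_pow_mul_zpow {z : ℂ} (hz : z ≠ 0) (N : ℕ) (t : ℤ) :
    (z + 1 / z) ^ N * z ^ t =
      ∑ k ∈ range (N + 1), (N.choose k : ℂ) * z ^ (2 * (k : ℤ) - N + t) := by
  rw [add_pow, sum_mul]
  refine sum_congr rfl fun k hk => ?_
  have hkN : k ≤ N := Nat.lt_succ_iff.mp (mem_range.mp hk)
  rw [show 2 * (k : ℤ) - N + t = k - (N - k : ℕ) + t by push_cast [hkN]; ring, zpow_add₀ hz,
    zpow_sub₀ hz, zpow_natCast, zpow_natCast, one_div, inv_pow]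
  ring

theorem circleIntegral_add_inv_pow_mul_zpow (N : ℕ) (t : ℤ) {R : ℝ} (hR : 0 < R) :
    (∮ z in C(0, R), (z + 1 / z) ^ N * z ^ t) =
      2 * π * I *
        ∑ k ∈ range (N + 1), if 2 * (k : ℤ) - N + t = -1 then (N.choose k : ℂ) else 0 := by
  have hz : ∀ z ∈ sphere (0 : ℂ) R, z ≠ 0 := fun z hz => ne_zero_of_mem_sphere hR.ne' ⟨z, hz⟩
  rw [circleIntegral.integral_congr hR.le fun z hz' => add_inv_pow_mul_zpow (hz z hz') N t,
    circleIntegral.integral_fun_sum (f := fun k z => (N.choose k : ℂ) * z ^ (2 * (k : ℤ) - N + t))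
      fun k _ => ContinuousOn.circleIntegrable hR.le
      (continuousOn_const.mul ((continuousOn_zpow₀ _).mono fun z hz' => hz z hz')), mul_sum]
  refine sum_congr rfl fun k _ => ?_
  rw [circleIntegral.integral_const_mul, circleIntegral_zpow _ hR]
  split_ifs <;> ring

theorem one_sub_one_div_sq_ne_zero_s18 {z : ℂ} (h0 : z ≠ 0) (h1 : z ^ 2 ≠ 1) : 1 - 1 / z ^ 2 ≠ 0 := by
  rw [sub_ne_zero, ne_comm, ne_eq, div_eq_one_iff_eq (pow_ne_zero 2 h0)]
  exact h1.symm

theorem isOpen_ne_zero_sq_ne_one : IsOpen {z : ℂ | z ≠ 0 ∧ z ^ 2 ≠ 1} :=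
  isOpen_ne.inter (isOpen_ne_fun (continuous_pow 2) continuous_const)

theorem sphere_subset_ne_zero_sq_ne_one {r : ℝ} (hr : 1 < r) :
    sphere (0 : ℂ) r ⊆ {z : ℂ | z ≠ 0 ∧ z ^ 2 ≠ 1} := by
  intro z hz
  rw [mem_sphere_zero_iff_norm] at hz
  refine ⟨norm_pos_iff.mp (by linarith), fun h => ?_⟩
  have := congrArg norm h
  rw [norm_pow, hz, norm_one] at this
  nlinarith

theorem differentiableOn_xi_zero_div (α : ℕ) :
    DifferentiableOn ℂ (fun w => xi α 0 w / (1 - 1 / w ^ 2)) {z : ℂ | z ≠ 0 ∧ z ^ 2 ≠ 1} := by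
  rintro z ⟨h0, h1⟩
  show DifferentiableWithinAt ℂ (fun w : ℂ => w ^ (-(α : ℤ)) / (1 - 1 / w ^ 2)) _ z
  have : DifferentiableAt ℂ (fun w : ℂ => 1 - 1 / w ^ 2) z := by fun_prop (disch := simp [h0])
  exact ((differentiableAt_zpow.mpr (Or.inl h0)).div this
    (one_sub_one_div_sq_ne_zero_s18 h0 h1)).differentiableWithinAt

theorem hasDerivAt_add_inv_pow_div_factorial (N : ℕ) {z : ℂ} (hz : z ≠ 0) :
    HasDerivAt (fun w : ℂ => (w + 1 / w) ^ (N + 1) / ((N + 1).factorial : ℂ))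
      ((z + 1 / z) ^ N / (N.factorial : ℂ) * (1 - 1 / z ^ 2)) z := by
  have hx : HasDerivAt (fun w : ℂ => w + 1 / w) (1 - 1 / z ^ 2) z := by
    simpa [one_div, sub_eq_add_neg] using (hasDerivAt_id' z).fun_add (hasDerivAt_inv hz)
  refine ((hx.fun_pow (N + 1)).div_const ((N + 1).factorial : ℂ)).congr_deriv ?_
  rw [Nat.factorial_succ]
  push_cast
  field_simp

theorem circleIntegral_add_inv_pow_mul_xi_one (α N : ℕ) {r : ℝ} (hr : 1 < r) :
    (∮ z in C(0, r), (z + 1 / z) ^ (N + 1) / ((N + 1).factorial : ℂ) * xi α 1 z) =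
      (N.factorial : ℂ)⁻¹ * ∮ z in C(0, r), (z + 1 / z) ^ N * z ^ (-(α : ℤ)) := by
  set f : ℂ → ℂ := fun w => (w + 1 / w) ^ (N + 1) / ((N + 1).factorial : ℂ)
  set g : ℂ → ℂ := fun w => xi α 0 w / (1 - 1 / w ^ 2)
  have hr0 : (0 : ℝ) ≤ r := by linarith
  have hsub := sphere_subset_ne_zero_sq_ne_one hr
  have hf : DifferentiableOn ℂ f {z : ℂ | z ≠ 0 ∧ z ^ 2 ≠ 1} := fun z hz =>
    (hasDerivAt_add_inv_pow_div_factorial N hz.1).differentiableAt.differentiableWithinAt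
  calc (∮ z in C(0, r), f z * xi α 1 z)
      = -∮ z in C(0, r), f z * deriv g z := by
        simp only [xi, mul_neg, circleIntegral, smul_neg, intervalIntegral.integral_neg, g]
    _ = ∮ z in C(0, r), deriv f z * g z := by
        rw [circleIntegral_mul_deriv isOpen_ne_zero_sq_ne_one hf (differentiableOn_xi_zero_div α)
          hr0 hsub, neg_neg]
    _ = ∮ z in C(0, r), (N.factorial : ℂ)⁻¹ * ((z + 1 / z) ^ N * z ^ (-(α : ℤ))) := by
        refine circleIntegral.integral_congr hr0 fun z hz => ?_
        obtain ⟨h0, h1⟩ := hsub hz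
        rw [(hasDerivAt_add_inv_pow_div_factorial N h0).deriv]
        simp only [g, xi]
        field_simp [one_sub_one_div_sq_ne_zero_s18 h0 h1]
    _ = _ := circleIntegral.integral_const_mul _ _ _ _

theorem circleIntegral_add_inv_pow_mul_xi_one_div_two_pi_I (α N : ℕ) {r : ℝ} (hr : 1 < r) :
    (∮ z in C(0, r), (z + 1 / z) ^ (N + 1) / ((N + 1).factorial : ℂ) * xi α 1 z) / (2 * π * I) =
      ∑ k ∈ range (N + 1),
        if 2 * k + 1 = N + α then 1 / ((k.factorial : ℂ) * ((N - k).factorial : ℂ)) else 0 := by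
  rw [circleIntegral_add_inv_pow_mul_xi_one α N hr,
    circleIntegral_add_inv_pow_mul_zpow N _ (by linarith), mul_sum, mul_sum, sum_div]
  refine sum_congr rfl fun k hk => ?_
  have hkN : k ≤ N := Nat.lt_succ_iff.mp (mem_range.mp hk)
  split_ifs
  · rw [Nat.cast_choose ℂ hkN]
    field_simp [two_pi_I_ne_zero]
    rw [mul_assoc, div_mul_cancel_left₀ (Nat.cast_ne_zero.mpr N.factorial_ne_zero), one_div]
  · omega
  · omega
  · simp

-- `-Res_{z=∞}` is the integral `(1/2πi) ∮_{|z|=r}` over a circle enclosing the poles `0, ±1`.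
/-- With `𝓘^1_a[f] = -Res_{z=∞} (x^{a+1}/(a+1)!) f` computed as the counterclockwise circle
integral `(1/2πi) ∮_{|z|=r}` for any radius `r > 1` (beyond all finite poles):
`𝓘^1_{2m}[ξ^1_0] = 1/(m!)^2`, `𝓘^1_{2m+1}[ξ^0_0] = 1/(m!(m+1)!)`,
`𝓘^1_{2m+1}[ξ^1_0] = 0`, `𝓘^1_{2m}[ξ^0_0] = 0`. -/
theorem stmt18 (m : ℕ) (r : ℝ) (hr : 1 < r) :
    (∮ z in C(0, r), (z + 1 / z) ^ (2 * m + 1) / (Nat.factorial (2 * m + 1) : ℂ) *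
        xi 1 1 z) / (2 * (Real.pi : ℂ) * Complex.I)
      = 1 / (Nat.factorial m : ℂ) ^ 2 ∧
    (∮ z in C(0, r), (z + 1 / z) ^ (2 * m + 2) / (Nat.factorial (2 * m + 2) : ℂ) *
        xi 0 1 z) / (2 * (Real.pi : ℂ) * Complex.I)
      = 1 / ((Nat.factorial m : ℂ) * (Nat.factorial (m + 1) : ℂ)) ∧
    (∮ z in C(0, r), (z + 1 / z) ^ (2 * m + 2) / (Nat.factorial (2 * m + 2) : ℂ) *
        xi 1 1 z) / (2 * (Real.pi : ℂ) * Complex.I) = 0 ∧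
    (∮ z in C(0, r), (z + 1 / z) ^ (2 * m + 1) / (Nat.factorial (2 * m + 1) : ℂ) *
        xi 0 1 z) / (2 * (Real.pi : ℂ) * Complex.I) = 0 := by
  refine ⟨?_, ?_, ?_, ?_⟩
  · rw [circleIntegral_add_inv_pow_mul_xi_one_div_two_pi_I 1 (2 * m) hr,
      sum_eq_single_of_mem m (mem_range.mpr (by omega)) fun k _ hk => if_neg (by omega), if_pos rfl,
      two_mul, Nat.add_sub_cancel, sq]
  · rw [circleIntegral_add_inv_pow_mul_xi_one_div_two_pi_I 0 (2 * m + 1) hr,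
      sum_eq_single_of_mem m (mem_range.mpr (by omega)) fun k _ hk => if_neg (by omega), if_pos rfl,
      show 2 * m + 1 - m = m + 1 by omega]
  · rw [circleIntegral_add_inv_pow_mul_xi_one_div_two_pi_I 1 (2 * m + 1) hr]
    exact sum_eq_zero fun k _ => if_neg (by omega)
  · rw [circleIntegral_add_inv_pow_mul_xi_one_div_two_pi_I 0 (2 * m) hr]
    exact sum_eq_zero fun k _ => if_neg (by omega)
end

section
/- For $z_1, z_2 \in \mathbb{C}^*$ with $z_1 \neq \pm 1$ and $z_2 \neq \pm 1$ and $x(z)=z+1/z$: $\operatorname{Res}_{z=1}\frac{f(z)\ln z}{x_1 - x(z)} + \operatorname{Res}_{z=-1}\frac{f(z)\ln z}{x_1-x(z)}$ with $f = \xi^0_0$ equals $\frac{x_1}{x_1^2 - 4}$, and with $f = \xi^1_0$ equals $\frac{2}{x_1^2-4}$, for any determination of $\ln$ holomorphic near $z = \pm 1$ (e.g., branch cut on $i\mathbb{R}_-$ with $\ln 1 = 0$). -/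
open Filter Metric

open Complex Real Topology

/-! At `c = ±1` the form `ξ = N(z)/(z² - 1)² dz` has a double pole, so the residue of `ξ · g`,
`g = ln z/(x₁ - x(z))`, is the derivative at `c` of `N(z)/(z + c)² · g(z)`. Both `N = 2z`
and `N = z² + 1` satisfy `c N'(c) = N(c)`, which makes `(N/(z + c)²)'(c) = 0`: the value
`g(c)`, the only place where the branch of `ln` enters, drops out. As `x'(±1) = 0`,
`g'(c) = ln'(c)/(x₁ - x(c)) = 1/(c (x₁ - 2c))`, so the residue is `c N(c)/(4 (x₁ - 2c))`;
summing over `c = ±1` gives both formulas. -/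

lemma xi_zero_one {z : ℂ} (h0 : z ≠ 0) (h1 : z ^ 2 ≠ 1) :
    xi 0 1 z = 2 * z / (z ^ 2 - 1) ^ 2 := by
  have hd : z ^ 2 - 1 ≠ 0 := sub_ne_zero.2 h1
  have heq : (fun w : ℂ => xi 0 0 w / (1 - 1 / w ^ 2)) =ᶠ[𝓝 z]
      fun w => w ^ 2 / (w ^ 2 - 1) := by
    filter_upwards [eventually_ne_nhds h0] with w hw
    simp only [xi, CharP.cast_eq_zero, neg_zero, zpow_zero]
    field_simp
  have hD : HasDerivAt (fun w : ℂ => w ^ 2 / (w ^ 2 - 1)) _ z :=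
    (hasDerivAt_pow 2 z).div ((hasDerivAt_pow 2 z).sub_const 1) hd
  change -deriv (fun w : ℂ => xi 0 0 w / (1 - 1 / w ^ 2)) z = _
  rw [heq.deriv_eq, hD.deriv]
  field_simp
  ring

lemma xi_one_one {z : ℂ} (h0 : z ≠ 0) (h1 : z ^ 2 ≠ 1) :
    xi 1 1 z = (z ^ 2 + 1) / (z ^ 2 - 1) ^ 2 := by
  have hd : z ^ 2 - 1 ≠ 0 := sub_ne_zero.2 h1
  have heq : (fun w : ℂ => xi 1 0 w / (1 - 1 / w ^ 2)) =ᶠ[𝓝 z]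
      fun w => w / (w ^ 2 - 1) := by
    filter_upwards [eventually_ne_nhds h0] with w hw
    simp only [xi, Nat.cast_one, zpow_neg_one]
    field_simp
  have hD : HasDerivAt (fun w : ℂ => w / (w ^ 2 - 1)) _ z :=
    (hasDerivAt_id' z).div ((hasDerivAt_pow 2 z).sub_const 1) hd
  change -deriv (fun w : ℂ => xi 1 0 w / (1 - 1 / w ^ 2)) z = _
  rw [heq.deriv_eq, hD.deriv]
  field_simp
  ring

lemma hasDerivAt_of_exp_eq {L : ℂ → ℂ} {c : ℂ} (hLc : ContinuousAt L c)
    (hL : ∀ᶠ z in 𝓝 c, exp (L z) = z) : HasDerivAt L c⁻¹ c := by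
  have hc : exp (L c) = c := hL.self_of_nhds
  simpa only [hc] using (hasDerivAt_exp (L c)).of_local_left_inverse hLc (exp_ne_zero _) hL

lemma hasDerivAt_add_one_div_of_sq_eq_one {c : ℂ} (hc : c ^ 2 = 1) :
    HasDerivAt (fun z : ℂ => z + 1 / z) 0 c := by
  have hc0 : c ≠ 0 := by rintro rfl; norm_num at hc
  have h := (hasDerivAt_id' c).fun_add (hasDerivAt_inv hc0)
  rw [hc, inv_one, add_neg_cancel] at h
  simpa only [one_div] using h

lemma neg_notMem_closedBall_of_zero_notMem {E : Type*} [SeminormedAddCommGroup E]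
    [NormedSpace ℝ E] {c : E} {ρ : ℝ} (h : (0 : E) ∉ closedBall c ρ) :
    -c ∉ closedBall c ρ := by
  simp only [mem_closedBall, dist_eq_norm, zero_sub, norm_neg, not_le] at h ⊢
  rw [show -c - c = (-2 : ℝ) • c by module, norm_smul]
  norm_num
  linarith [norm_nonneg c]

lemma hasDerivAt_log_div_sub_add_one_div {L : ℂ → ℂ} {c x1 : ℂ} (hc : c ^ 2 = 1)
    (hx1 : x1 ≠ 2 * c) (hL : ∀ᶠ z in 𝓝 c, exp (L z) = z)
    (hg : ContinuousAt (fun z => L z / (x1 - (z + 1 / z))) c) :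
    HasDerivAt (fun z => L z / (x1 - (z + 1 / z))) (c⁻¹ / (x1 - 2 * c)) c := by
  have hφ : HasDerivAt (fun z : ℂ => x1 - (z + 1 / z)) 0 c := by
    simpa using (hasDerivAt_add_one_div_of_sq_eq_one hc).const_sub x1
  have hφc : x1 - (c + 1 / c) = x1 - 2 * c := by
    rw [one_div, inv_eq_of_mul_eq_one_right (by rw [← sq, hc])]; ring
  have hx1c : x1 - 2 * c ≠ 0 := sub_ne_zero.2 hx1
  have hφ0 : x1 - (c + 1 / c) ≠ 0 := hφc ▸ hx1c
  have hLc : ContinuousAt L c := by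
    refine (hg.mul hφ.continuousAt).congr ?_
    filter_upwards [hφ.continuousAt.eventually_ne hφ0] with z hz
    exact div_mul_cancel₀ _ hz
  refine ((hasDerivAt_of_exp_eq hLc hL).fun_div hφ hφ0).congr_deriv ?_
  rw [hφc, mul_zero, sub_zero, sq, mul_div_mul_right _ _ hx1c]

lemma hasDerivAt_div_add_sq_of_mul_eq {N : ℂ → ℂ} {c N' : ℂ} (hc0 : c ≠ 0)
    (hN : HasDerivAt N N' c) (hNc : c * N' = N c) :
    HasDerivAt (fun z => N z / (z + c) ^ 2) 0 c := by
  have h2c : c + c ≠ 0 := by rw [← two_mul]; exact mul_ne_zero two_ne_zero hc0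
  refine (hN.fun_div (((hasDerivAt_id' c).add_const c).fun_pow 2)
    (pow_ne_zero 2 h2c)).congr_deriv ?_
  field_simp
  linear_combination (4 * c) * hNc

lemma circleIntegral_div_sq_sub_one_sq_mul {c N' g' : ℂ} {N g : ℂ → ℂ} {ρ : ℝ}
    (hc : c ^ 2 = 1) (hρ : 0 < ρ) (hB : -c ∉ closedBall c ρ)
    (hN : DifferentiableOn ℂ N (closedBall c ρ)) (hg : DifferentiableOn ℂ g (closedBall c ρ))
    (hN' : HasDerivAt N N' c) (hNc : c * N' = N c) (hg' : HasDerivAt g g' c) :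
    ∮ z in C(c, ρ), N z / (z ^ 2 - 1) ^ 2 * g z = 2 * π * I * (N c / 4 * g') := by
  have hc0 : c ≠ 0 := by rintro rfl; norm_num at hc
  have hzc : ∀ z ∈ closedBall c ρ, z + c ≠ 0 := fun z hz h =>
    hB (by rwa [eq_neg_of_add_eq_zero_left h] at hz)
  have hsplit : (fun z => N z / (z ^ 2 - 1) ^ 2 * g z)
      = fun z => (1 / (z - c) ^ 2) • (N z / (z + c) ^ 2 * g z) := by
    funext z
    rw [show z ^ 2 - 1 = (z - c) * (z + c) by linear_combination hc, mul_pow,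
      div_mul_eq_div_div_swap, smul_eq_mul]
    ring
  have hh : DifferentiableOn ℂ (fun z => N z / (z + c) ^ 2 * g z) (closedBall c ρ) :=
    (hN.div (by fun_prop) fun z hz => pow_ne_zero 2 (hzc z hz)).mul hg
  rw [hsplit, hh.deriv_eq_smul_circleIntegral hρ,
    ((hasDerivAt_div_add_sq_of_mul_eq hc0 hN' hNc).fun_mul hg').deriv, smul_eq_mul,
    show (c + c) ^ 2 = 4 by linear_combination 4 * hc]
  ring

lemma sq_ne_one_of_mem_sphere {c z : ℂ} {ρ : ℝ} (hc : c ^ 2 = 1) (hρ : 0 < ρ)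
    (hB : -c ∉ closedBall c ρ) (hz : z ∈ sphere c ρ) : z ^ 2 ≠ 1 := by
  intro h
  rcases sq_eq_sq_iff_eq_or_eq_neg.1 (h.trans hc.symm) with rfl | rfl
  · simp [hρ.ne] at hz
  · exact hB (sphere_subset_closedBall hz)

section Residue

variable {c x1 : ℂ} {L : ℂ → ℂ} {ρ : ℝ} (hc : c ^ 2 = 1) (hx1 : x1 ≠ 2 * c)
  (hL : ∀ᶠ z in 𝓝 c, exp (L z) = z) (hρ : 0 < ρ)
  (hA : AnalyticOnNhd ℂ (fun z => L z / (x1 - (z + 1 / z))) (closedBall c ρ))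
  (hB : (0 : ℂ) ∉ closedBall c ρ)
include hc hx1 hL hρ hA hB

theorem circleIntegral_mul_log_div_sub_add_one_div {f N : ℂ → ℂ} {N' : ℂ}
    (hf : ∀ z, z ≠ 0 → z ^ 2 ≠ 1 → f z = N z / (z ^ 2 - 1) ^ 2)
    (hN : DifferentiableOn ℂ N (closedBall c ρ)) (hN' : HasDerivAt N N' c)
    (hNc : c * N' = N c) :
    ∮ z in C(c, ρ), f z * L z / (x1 - (z + 1 / z))
      = 2 * π * I * (c * N c / 4) / (x1 - 2 * c) := by
  have hB' := neg_notMem_closedBall_of_zero_notMem hB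
  have hg' := hasDerivAt_log_div_sub_add_one_div hc hx1 hL
    (hA c (mem_closedBall_self hρ.le)).continuousAt
  have hsphere : Set.EqOn (fun z => f z * L z / (x1 - (z + 1 / z)))
      (fun z => N z / (z ^ 2 - 1) ^ 2 * (L z / (x1 - (z + 1 / z)))) (sphere c ρ) := by
    intro z hz
    have h0 : z ≠ 0 := by rintro rfl; exact hB (sphere_subset_closedBall hz)
    simp only [hf z h0 (sq_ne_one_of_mem_sphere hc hρ hB' hz), mul_div_assoc]
  rw [circleIntegral.integral_congr hρ.le hsphere, circleIntegral_div_sq_sub_one_sq_mul hc hρ hB'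
    hN hA.differentiableOn hN' hNc hg',
    inv_eq_of_mul_eq_one_right (by rw [← sq, hc])]
  ring

theorem circleIntegral_xi_zero_one_mul_log_div :
    ∮ z in C(c, ρ), xi 0 1 z * L z / (x1 - (z + 1 / z)) = π * I / (x1 - 2 * c) := by
  rw [circleIntegral_mul_log_div_sub_add_one_div hc hx1 hL hρ hA hB (N := fun z => 2 * z)
    (fun z h0 h1 => xi_zero_one h0 h1) (by fun_prop) ((hasDerivAt_id' c).const_mul 2) (by ring)]
  rw [show c * (2 * c) = 2 by linear_combination 2 * hc]
  ring

theorem circleIntegral_xi_one_one_mul_log_div :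
    ∮ z in C(c, ρ), xi 1 1 z * L z / (x1 - (z + 1 / z)) = π * I * c / (x1 - 2 * c) := by
  rw [circleIntegral_mul_log_div_sub_add_one_div hc hx1 hL hρ hA hB (N := fun z => z ^ 2 + 1)
    (fun z h0 h1 => xi_one_one h0 h1) (by fun_prop) ((hasDerivAt_pow 2 c).add_const 1)
    (by linear_combination hc)]
  rw [show c ^ 2 + 1 = 2 by linear_combination hc]
  ring

end Residue

theorem stmt19_general (x1 : ℂ) (hx1 : x1 ≠ 2) (hx1' : x1 ≠ -2)
    (L : ℂ → ℂ)
    (hL1 : ∀ᶠ z in nhds (1 : ℂ), Complex.exp (L z) = z)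
    (hL2 : ∀ᶠ z in nhds (-1 : ℂ), Complex.exp (L z) = z)
    (ρ1 ρ2 : ℝ) (hρ1 : 0 < ρ1) (hρ2 : 0 < ρ2)
    (hA1 : AnalyticOnNhd ℂ (fun z => L z / (x1 - (z + 1 / z))) (closedBall (1 : ℂ) ρ1))
    (hA2 : AnalyticOnNhd ℂ (fun z => L z / (x1 - (z + 1 / z))) (closedBall (-1 : ℂ) ρ2))
    (hB1 : (0 : ℂ) ∉ closedBall (1 : ℂ) ρ1)
    (hB2 : (0 : ℂ) ∉ closedBall (-1 : ℂ) ρ2) :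
    ((∮ z in C(1, ρ1), xi 0 1 z * L z / (x1 - (z + 1 / z)))
        + (∮ z in C(-1, ρ2), xi 0 1 z * L z / (x1 - (z + 1 / z))))
        / (2 * (Real.pi : ℂ) * Complex.I)
      = x1 / (x1 ^ 2 - 4) ∧
    ((∮ z in C(1, ρ1), xi 1 1 z * L z / (x1 - (z + 1 / z)))
        + (∮ z in C(-1, ρ2), xi 1 1 z * L z / (x1 - (z + 1 / z))))
        / (2 * (Real.pi : ℂ) * Complex.I)
      = 2 / (x1 ^ 2 - 4) := by
  have hc1 : (1 : ℂ) ^ 2 = 1 := one_pow 2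
  have hc2 : (-1 : ℂ) ^ 2 = 1 := by norm_num
  have hx1c : x1 ≠ 2 * 1 := by rwa [mul_one]
  have hx2c : x1 ≠ 2 * -1 := by rwa [mul_neg_one]
  rw [circleIntegral_xi_zero_one_mul_log_div hc1 hx1c hL1 hρ1 hA1 hB1,
    circleIntegral_xi_zero_one_mul_log_div hc2 hx2c hL2 hρ2 hA2 hB2,
    circleIntegral_xi_one_one_mul_log_div hc1 hx1c hL1 hρ1 hA1 hB1,
    circleIntegral_xi_one_one_mul_log_div hc2 hx2c hL2 hρ2 hA2 hB2]
  have h2 : x1 - 2 ≠ 0 := sub_ne_zero.2 hx1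
  have h2' : x1 + 2 ≠ 0 := by rwa [← sub_neg_eq_add, sub_ne_zero]
  have h4 : x1 ^ 2 - 4 ≠ 0 := by
    rw [show x1 ^ 2 - 4 = (x1 - 2) * (x1 + 2) by ring]
    exact mul_ne_zero h2 h2'
  have hπ : (π : ℂ) ≠ 0 := ofReal_ne_zero.2 pi_ne_zero
  constructor <;> field_simp <;> ring

/-- For `x1 ∉ {2,-2}` and any branch `L` of the logarithm holomorphic near `z = ±1`
(`exp ∘ L = id` there), the sum of residues at `z = 1` and `z = -1` — computed as
`(1/2πi)` times circle integrals over small circles around `±1` whose closed disks avoid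
the other singularities, on which `L/(x1 - x)` is analytic — of
`f(z) ln z/(x1 - x(z))` with `f = ξ^0_0` equals `x1/(x1^2-4)`, and with `f = ξ^1_0`
equals `2/(x1^2-4)`. -/
theorem stmt19 (x1 : ℂ) (hx1 : x1 ≠ 2) (hx1' : x1 ≠ -2)
    (L : ℂ → ℂ)
    (hL1 : ∀ᶠ z in nhds (1 : ℂ), Complex.exp (L z) = z)
    (hL2 : ∀ᶠ z in nhds (-1 : ℂ), Complex.exp (L z) = z)
    (ρ1 ρ2 : ℝ) (hρ1 : 0 < ρ1) (hρ2 : 0 < ρ2)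
    (hA1 : AnalyticOnNhd ℂ (fun z => L z / (x1 - (z + 1 / z))) (closedBall (1 : ℂ) ρ1))
    (hA2 : AnalyticOnNhd ℂ (fun z => L z / (x1 - (z + 1 / z))) (closedBall (-1 : ℂ) ρ2))
    (hB1 : (0 : ℂ) ∉ closedBall (1 : ℂ) ρ1) (hB1' : (-1 : ℂ) ∉ closedBall (1 : ℂ) ρ1)
    (hB2 : (0 : ℂ) ∉ closedBall (-1 : ℂ) ρ2) (hB2' : (1 : ℂ) ∉ closedBall (-1 : ℂ) ρ2) :
    ((∮ z in C(1, ρ1), xi 0 1 z * L z / (x1 - (z + 1 / z)))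
        + (∮ z in C(-1, ρ2), xi 0 1 z * L z / (x1 - (z + 1 / z))))
        / (2 * (Real.pi : ℂ) * Complex.I)
      = x1 / (x1 ^ 2 - 4) ∧
    ((∮ z in C(1, ρ1), xi 1 1 z * L z / (x1 - (z + 1 / z)))
        + (∮ z in C(-1, ρ2), xi 1 1 z * L z / (x1 - (z + 1 / z))))
        / (2 * (Real.pi : ℂ) * Complex.I)
      = 2 / (x1 ^ 2 - 4) :=
  stmt19_general x1 hx1 hx1' L hL1 hL2 ρ1 ρ2 hρ1 hρ2 hA1 hA2 hB1 hB2
end
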